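/- Let A be a matroid on K(V) in which all vertex stars minus m−1 edges are cocircuits and which satisfies axiom (C2) for dimension m. If k ≥ m, then every k-valent-0-extension of a rigid edge set is rigid. -/

import Mathlib

open Matroid Set

/-- A circuit of a matroid: a minimal dependent set. -/
def Matroid.IsCircuit' {α : Type*} (M : Matroid α) (C : Set α) : Prop :=
  M.Dep C ∧ ∀ D, D ⊂ C → M.Indep D

/-- A cocircuit: a circuit of the dual matroid. -/
def Matroid.IsCocircuit' {α : Type*} (M : Matroid α) (C : Set α) : Prop :=
  M✶.IsCircuit' C

/-- A hyperplane: a maximal subset of the ground set not containing a basis. -/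
def Matroid.IsHyperplane {α : Type*} (M : Matroid α) (H : Set α) : Prop :=
  H ⊆ M.E ∧ (¬ ∃ B ⊆ H, M.IsBase B) ∧
    ∀ H', H ⊂ H' → H' ⊆ M.E → ∃ B ⊆ H', M.IsBase B

/-- The rank of a set: the size of a largest independent subset. -/
noncomputable def Matroid.rk {α : Type*} (M : Matroid α) (X : Set α) : ℕ :=
  sSup {n | ∃ I ⊆ X, M.Indep I ∧ I.ncard = n}

/-- `cK U` is the edge set of the complete graph on the vertex set `U`. -/
def cK {V : Type*} (U : Set V) : Set (Sym2 V) :=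
  {e | ¬ e.IsDiag ∧ ∀ v ∈ e, v ∈ U}

/-- The support (set of endpoints) of an edge set. -/
def supp {V : Type*} (E : Set (Sym2 V)) : Set V := {v | ∃ e ∈ E, v ∈ e}

/-- An edge set is rigid if its closure is the complete graph on its support. -/
def Rigid {V : Type*} (A : Matroid (Sym2 V)) (E : Set (Sym2 V)) : Prop :=
  A.closure E = cK (supp E)

/-- `A` is an `m`-dimensional abstract rigidity matroid on `K(W)`. -/
def IsARMOn {V : Type*} (m : ℕ) (W : Set V) (A : Matroid (Sym2 V)) : Prop :=
  A.E = cK W ∧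
  (∀ E F : Set (Sym2 V), E ⊆ cK W → F ⊆ cK W →
    (supp E ∩ supp F).ncard < m →
    A.closure (E ∪ F) ⊆ cK (supp E) ∪ cK (supp F)) ∧
  (∀ E F : Set (Sym2 V), E ⊆ cK W → F ⊆ cK W →
    Rigid A E → Rigid A F → m ≤ (supp E ∩ supp F).ncard →
    Rigid A (E ∪ F))

/-- The star of a vertex: all edges containing it. -/
def starv {V : Type*} (v : V) : Set (Sym2 V) := {e | ¬ e.IsDiag ∧ v ∈ e}

/-- `C` is a vertex star minus `m-1` edges. -/
def IsStarMinus {V : Type*} (m : ℕ) (C : Set (Sym2 V)) : Prop :=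
  ∃ v : V, ∃ D ⊆ starv v, D.ncard = m - 1 ∧ C = starv v \ D

/-- The valence (degree) of a vertex in an edge set. -/
noncomputable def valence {V : Type*} (C : Set (Sym2 V)) (v : V) : ℕ :=
  {e ∈ C | v ∈ e}.ncard

/-- `bigstar V' = K(V) \ K(V \ V')`. -/
def bigstar {V : Type*} (V' : Set V) : Set (Sym2 V) :=
  cK (univ : Set V) \ cK (V'ᶜ)

/-- The family `H_m(V)` of unions of two complete graphs covering `V` and
meeting in `m-1` vertices. -/
def HmFam (m : ℕ) (V : Type*) : Set (Set (Sym2 V)) :=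
  {H | ∃ V₁ V₂ : Set V, V₁ ∪ V₂ = univ ∧ (V₁ ∩ V₂).ncard = m - 1 ∧
    ¬ V₁ ⊆ V₂ ∧ ¬ V₂ ⊆ V₁ ∧ H = cK V₁ ∪ cK V₂}

/-- The family `H_m^{(1)}(K(X))` of sets `Δ_v^A` relative to a vertex set `X`. -/
def Hm1Fam {V : Type*} (m : ℕ) (X : Set V) : Set (Set (Sym2 V)) :=
  {H | ∃ v ∈ X, ∃ A ⊆ X \ {v}, A.ncard = m - 1 ∧
    H = cK ({v} ∪ A) ∪ cK (X \ {v})}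

/-
The 0-extension `E ∪ cone w S` has the same closure as `E ∪ K(S ∪ {w})`: the edges inside `S`
lie in the closure of the rigid set `E`, and the remaining edges of `K(S ∪ {w})` are the cone
edges. The complete graph `K(S ∪ {w})` is closed, hence rigid: an edge leaving it lies in the
star of a vertex outside it minus `m - 1` edges, a cocircuit disjoint from it. Since
`|S| = k ≥ m` and `supp E ∩ (S ∪ {w}) = S`, axiom (C2) makes `E ∪ K(S ∪ {w})` rigid.
-/

namespace Matroid

variable {α : Type*} {M : Matroid α} {C X : Set α} {e : α}

lemma isCocircuit'_iff : M.IsCocircuit' C ↔ M.IsCocircuit C :=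
  isCircuit_iff_forall_ssubset.symm

lemma IsCocircuit.notMem_closure_of_disjoint (hC : M.IsCocircuit C) (heC : e ∈ C)
    (hCX : Disjoint C X) : e ∉ M.closure X := by
  intro he
  obtain ⟨D, hDX, hD, heD⟩ :=
    M.exists_isCircuit_of_mem_closure he (hCX.notMem_of_mem_left heC)
  refine hD.inter_isCocircuit_ne_singleton hC (e := e)
    (Set.eq_singleton_iff_unique_mem.2 ⟨⟨heD, heC⟩, ?_⟩)
  rintro f ⟨hfD, hfC⟩
  exact (hDX hfD).resolve_right (hCX.notMem_of_mem_left hfC)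

end Matroid

section CompleteGraph

variable {V : Type*}

def cone (w : V) (S : Set V) : Set (Sym2 V) := {e | ∃ v ∈ S, e = s(v, w)}

lemma supp_union (E F : Set (Sym2 V)) : supp (E ∪ F) = supp E ∪ supp F := by
  ext v
  simp [supp, or_and_right, exists_or]

lemma cK_mono {U U' : Set V} (h : U ⊆ U') : cK U ⊆ cK U' :=
  fun _ he => ⟨he.1, fun v hv => h (he.2 v hv)⟩

lemma cK_supp_cK (U : Set V) : cK (supp (cK U)) = cK U :=
  subset_antisymm (cK_mono fun _ ⟨_, he, hv⟩ => he.2 _ hv)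
    fun e he => ⟨he.1, fun _ hv => ⟨e, he, hv⟩⟩

lemma supp_cK {U : Set V} (hU : U.Nontrivial) : supp (cK U) = U := by
  refine subset_antisymm (fun _ ⟨_, he, hu⟩ => he.2 _ hu) fun u hu => ?_
  obtain ⟨u', hu', hne⟩ := hU.exists_ne u
  refine ⟨s(u, u'), ⟨fun h => hne (Sym2.mk_isDiag_iff.1 h).symm, fun v hv => ?_⟩,
    Sym2.mem_mk_left u u'⟩
  rcases Sym2.mem_iff.1 hv with rfl | rfl
  exacts [hu, hu']

lemma disjoint_starv_cK {x : V} {T : Set V} (hx : x ∉ T) : Disjoint (starv x) (cK T) :=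
  Set.disjoint_left.2 fun _ he he' => hx (he'.2 x he.2)

lemma cone_subset_cK {w : V} {S : Set V} (hwS : w ∉ S) : cone w S ⊆ cK (insert w S) := by
  rintro _ ⟨v, hv, rfl⟩
  refine ⟨fun h => hwS (Sym2.mk_isDiag_iff.1 h ▸ hv), fun u hu => ?_⟩
  rcases Sym2.mem_iff.1 hu with rfl | rfl
  exacts [mem_insert_of_mem _ hv, mem_insert u S]

lemma cK_insert_subset (w : V) (S : Set V) : cK (insert w S) ⊆ cK S ∪ cone w S := by
  rintro ⟨a, b⟩ he
  have hab : a ≠ b := fun h => he.1 (Sym2.mk_isDiag_iff.2 h)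
  rcases he.2 a (Sym2.mem_mk_left a b), he.2 b (Sym2.mem_mk_right a b) with
    ⟨rfl | ha, rfl | hb⟩
  · exact absurd rfl hab
  · exact Or.inr ⟨b, hb, Sym2.eq_swap⟩
  · exact Or.inr ⟨a, ha, rfl⟩
  · refine Or.inl ⟨he.1, fun v hv => ?_⟩
    rcases Sym2.mem_iff.1 hv with rfl | rfl
    exacts [ha, hb]

lemma supp_cone {w : V} {S : Set V} (hS : S.Nonempty) : supp (cone w S) = insert w S := by
  refine subset_antisymm ?_ fun u hu => ?_
  · rintro u ⟨_, ⟨v, hv, rfl⟩, hu⟩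
    rcases Sym2.mem_iff.1 hu with rfl | rfl
    exacts [mem_insert_of_mem _ hv, mem_insert u S]
  rcases hu with rfl | hu
  · obtain ⟨v, hv⟩ := hS
    exact ⟨s(v, u), ⟨v, hv, rfl⟩, Sym2.mem_mk_right v u⟩
  · exact ⟨s(u, w), ⟨u, hu, rfl⟩, Sym2.mem_mk_left u w⟩

lemma exists_subset_starv_ncard_eq (m : ℕ) {x y : V} {T : Set V} (hxT : x ∉ T)
    (hT : (m : ℕ∞) ≤ T.encard) : ∃ D ⊆ starv x, D.ncard = m - 1 ∧ s(x, y) ∉ D := by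
  have hTy : ((m - 1 : ℕ) : ℕ∞) ≤ (T \ {y}).encard := by
    refine le_trans ?_ (T.encard_tsub_one_le_encard_sdiff_singleton y)
    push_cast
    exact tsub_le_tsub_right hT 1
  obtain ⟨D, hD, hDcard⟩ := exists_subset_encard_eq hTy
  refine ⟨(fun v => s(x, v)) '' D, ?_, ?_, ?_⟩
  · rintro _ ⟨v, hv, rfl⟩
    exact ⟨fun h => hxT (Sym2.mk_isDiag_iff.1 h ▸ (hD hv).1), Sym2.mem_mk_left x v⟩
  · rw [ncard_image_of_injective _ fun _ _ => Sym2.congr_right.1, ncard_def, hDcard,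
      ENat.toNat_natCast]
  · rintro ⟨v, hv, hvy⟩
    exact (hD hv).2 (Sym2.congr_right.1 hvy)

end CompleteGraph

section StarCocircuits

variable {V : Type*} {m : ℕ} {A : Matroid (Sym2 V)}

lemma closure_subset_cK (hE : A.E ⊆ cK univ) (hco : ∀ C, IsStarMinus m C → A.IsCocircuit' C)
    {T : Set V} (hT : (m : ℕ∞) ≤ T.encard) {X : Set (Sym2 V)} (hX : X ⊆ cK T) :
    A.closure X ⊆ cK T := by
  intro e he
  have heE : e ∈ cK univ := hE (A.closure_subset_ground X he)
  refine ⟨heE.1, fun x hx => ?_⟩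
  by_contra hxT
  obtain ⟨y, rfl⟩ := Sym2.mem_iff_exists.1 hx
  obtain ⟨D, hDx, hD, heD⟩ := exists_subset_starv_ncard_eq m (y := y) hxT hT
  have hC := Matroid.isCocircuit'_iff.1 (hco _ ⟨x, D, hDx, hD, rfl⟩)
  exact hC.notMem_closure_of_disjoint ⟨⟨heE.1, Sym2.mem_mk_left x y⟩, heD⟩
    ((disjoint_starv_cK hxT).mono sdiff_subset hX) he

lemma rigid_cK (hE : A.E = cK univ) (hco : ∀ C, IsStarMinus m C → A.IsCocircuit' C)
    {T : Set V} (hT : (m : ℕ∞) ≤ T.encard) : Rigid A (cK T) := by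
  rw [Rigid, cK_supp_cK]
  exact subset_antisymm (closure_subset_cK hE.subset hco hT subset_rfl)
    (A.subset_closure _ (hE ▸ cK_mono (subset_univ T)))

end StarCocircuits

lemma Rigid.closure_union_cone_eq {V : Type*} {A : Matroid (Sym2 V)} {E : Set (Sym2 V)}
    (hErig : Rigid A E) {S : Set V} {w : V} (hS : S ⊆ supp E) (hwS : w ∉ S)
    (hground : E ∪ cone w S ⊆ A.E) :
    A.closure (E ∪ cone w S) = A.closure (E ∪ cK (insert w S)) := by
  refine subset_antisymm
    (A.closure_subset_closure (union_subset_union_right E (cone_subset_cK hwS)))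
    (A.closure_subset_closure_of_subset_closure (union_subset ?_ ?_))
  · exact subset_union_left.trans (A.subset_closure _ hground)
  refine (cK_insert_subset w S).trans (union_subset ?_ ?_)
  · calc cK S ⊆ cK (supp E) := cK_mono hS
      _ = A.closure E := hErig.symm
      _ ⊆ A.closure (E ∪ cone w S) := A.closure_subset_closure subset_union_left
  · exact subset_union_right.trans (A.subset_closure _ hground)

theorem stmt_8_general {V : Type*} (m k : ℕ)
    (A : Matroid (Sym2 V)) (hE : A.E = cK (univ : Set V))
    (hco : ∀ C, IsStarMinus m C → A.IsCocircuit' C)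
    (hC2 : ∀ E F : Set (Sym2 V), E ⊆ cK (univ : Set V) → F ⊆ cK (univ : Set V) →
      Rigid A E → Rigid A F → m ≤ (supp E ∩ supp F).ncard → Rigid A (E ∪ F))
    (hk : m ≤ k) (E : Set (Sym2 V)) (hEsub : E ⊆ cK (univ : Set V))
    (hErig : Rigid A E)
    (S : Set V) (hS : S ⊆ supp E) (hScard : S.ncard = k)
    (w : V) (hw : w ∉ supp E) :
    Rigid A (E ∪ {e | ∃ v ∈ S, e = s(v, w)}) := by
  change Rigid A (E ∪ cone w S)
  rcases S.eq_empty_or_nonempty with rfl | hSne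
  · simpa [cone] using hErig
  have hwS : w ∉ S := fun h => hw (hS h)
  have hsuppU : supp (cK (insert w S)) = insert w S := by
    obtain ⟨v, hv⟩ := hSne
    exact supp_cK ⟨w, mem_insert w S, v, mem_insert_of_mem w hv, fun h => hwS (h ▸ hv)⟩
  have hmS : (m : ℕ∞) ≤ S.encard := (Nat.cast_le.2 (hScard ▸ hk)).trans S.ncard_le_encard
  have hUrig : Rigid A (cK (insert w S)) :=
    rigid_cK hE hco (hmS.trans (encard_le_encard (subset_insert w S)))
  have hcap : supp E ∩ supp (cK (insert w S)) = S := by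
    rw [hsuppU, inter_insert_of_notMem hw, inter_eq_right.2 hS]
  have hEUrig : Rigid A (E ∪ cK (insert w S)) :=
    hC2 _ _ hEsub (cK_mono (subset_univ _)) hErig hUrig (by rw [hcap, hScard]; exact hk)
  have hground : E ∪ cone w S ⊆ A.E :=
    hE ▸ union_subset hEsub ((cone_subset_cK hwS).trans (cK_mono (subset_univ _)))
  rw [Rigid, hErig.closure_union_cone_eq hS hwS hground, hEUrig, supp_union, supp_union,
    supp_cone hSne, hsuppU]

theorem stmt_8 {V : Type*} [Fintype V] [DecidableEq V] (m k : ℕ)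
    (A : Matroid (Sym2 V)) (hE : A.E = cK (univ : Set V))
    (hco : ∀ C, IsStarMinus m C → A.IsCocircuit' C)
    (hC2 : ∀ E F : Set (Sym2 V), E ⊆ cK (univ : Set V) → F ⊆ cK (univ : Set V) →
      Rigid A E → Rigid A F → m ≤ (supp E ∩ supp F).ncard → Rigid A (E ∪ F))
    (hk : m ≤ k) (E : Set (Sym2 V)) (hEsub : E ⊆ cK (univ : Set V))
    (hErig : Rigid A E)
    (S : Set V) (hS : S ⊆ supp E) (hScard : S.ncard = k)
    (w : V) (hw : w ∉ supp E) :
    Rigid A (E ∪ {e | ∃ v ∈ S, e = s(v, w)}) :=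
  stmt_8_general m k A hE hco hC2 hk E hEsub hErig S hS hScard w hw
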